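/- arXiv:math/0208229 — 6 statements merged into one kernel-verified Lean document; each statement's English description precedes it below -/
import Mathlib

section
/- A square real matrix B = (b_ij) is skew-symmetrizable if and only if B is sign-skew-symmetric and for all k ≥ 3 and all indices i_1, ..., i_k, the cyclic products satisfy b_{i_1 i_2} b_{i_2 i_3} ··· b_{i_k i_1} = (-1)^k b_{i_2 i_1} b_{i_3 i_2} ··· b_{i_1 i_k}. -/
/-- A square real matrix is sign-skew-symmetric if for all `i, j` either both
`B i j` and `B j i` vanish, or they have opposite signs. -/
def SignSkewSymmetric {n : ℕ} (B : Matrix (Fin n) (Fin n) ℝ) : Prop :=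
  ∀ i j, (B i j = 0 ∧ B j i = 0) ∨ B i j * B j i < 0

/-!
Necessity is a telescoping product: `d i * B i j = -(d j * B j i)` turns each cyclic product into
its reverse up to the sign `(-1)ᵏ` and the factor `∏ d(f (t + 1)) / ∏ d(f t) = 1`.

For sufficiency, give the graph of `B` (with `i ~ j` iff `B i j ≠ 0`) the edge weights
`log (-B i j / B j i)`, which are defined because `B` is sign-skew-symmetric. The cyclic
condition, which holds automatically for cycles of length 1 and 2, says that these weights sum
to zero around every closed walk. Hence they are differences `φ j - φ i` of a potential, obtained
by summing along a walk from a fixed root of each connected component, and `d = exp ∘ φ`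
skew-symmetrizes `B`.
-/

namespace SimpleGraph

variable {V α : Type*} [AddCommGroup α] {G : SimpleGraph V} (w : V → V → α)

namespace Walk

def edgeSum : {u v : V} → G.Walk u v → α
  | _, _, nil => 0
  | u, _, cons (v := v) _ p => w u v + p.edgeSum

@[simp] lemma edgeSum_nil {u : V} : (nil : G.Walk u u).edgeSum w = 0 := rfl

@[simp] lemma edgeSum_cons {u v x : V} (h : G.Adj u v) (p : G.Walk v x) :
    (cons h p).edgeSum w = w u v + p.edgeSum w := rfl

@[simp] lemma edgeSum_append {u v x : V} (p : G.Walk u v) (q : G.Walk v x) :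
    (p.append q).edgeSum w = p.edgeSum w + q.edgeSum w := by
  induction p with
  | nil => simp
  | cons h p ih => simp [ih, add_assoc]

lemma edgeSum_reverse (hw : ∀ u v, G.Adj u v → w v u = -w u v) {u v : V} (p : G.Walk u v) :
    p.reverse.edgeSum w = -p.edgeSum w := by
  induction p with
  | nil => simp
  | cons h p ih => simp [ih, hw _ _ h, add_comm]

lemma edgeSum_eq_sum_range {u v : V} (p : G.Walk u v) :
    p.edgeSum w = ∑ i ∈ Finset.range p.length, w (p.getVert i) (p.getVert (i + 1)) := by
  induction p with
  | nil => simp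
  | cons h p ih =>
    rw [edgeSum_cons, ih, length_cons, Finset.sum_range_succ', add_comm]
    simp [getVert_cons_succ]

lemma getVert_val_add_one_of_length_eq {u : V} (c : G.Walk u u) {m : ℕ} (hc : c.length = m + 1)
    (t : Fin (m + 1)) : c.getVert ↑(t + 1) = c.getVert (t + 1) := by
  rw [Fin.val_add_one]
  split_ifs with ht
  · simp [ht, ← hc, getVert_length]
  · rfl

lemma edgeSum_eq_sum_fin_of_length_eq {u : V} (c : G.Walk u u) {m : ℕ}
    (hc : c.length = m + 1) :
    c.edgeSum w = ∑ t : Fin (m + 1), w (c.getVert t) (c.getVert ↑(t + 1)) := by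
  simp only [c.getVert_val_add_one_of_length_eq hc, Fin.sum_univ_eq_sum_range
    (fun i => w (c.getVert i) (c.getVert (i + 1))), edgeSum_eq_sum_range, hc]

end Walk

variable {w}

lemma antisymm_of_edgeSum_closed_eq_zero (hcyc : ∀ u (c : G.Walk u u), c.edgeSum w = 0)
    {u v : V} (h : G.Adj u v) : w v u = -w u v := by
  have hback := hcyc u (.cons h (.cons h.symm .nil))
  simp only [Walk.edgeSum_cons, Walk.edgeSum_nil, add_zero] at hback
  exact eq_neg_of_add_eq_zero_right hback

lemma Walk.edgeSum_eq_of_closed_eq_zero (hcyc : ∀ u (c : G.Walk u u), c.edgeSum w = 0)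
    {u v : V} (p q : G.Walk u v) : p.edgeSum w = q.edgeSum w := by
  have hloop := hcyc u (p.append q.reverse)
  rwa [edgeSum_append, edgeSum_reverse w fun _ _ => antisymm_of_edgeSum_closed_eq_zero hcyc,
    ← sub_eq_add_neg, sub_eq_zero] at hloop

theorem exists_potential_of_edgeSum_closed_eq_zero
    (hcyc : ∀ u (c : G.Walk u u), c.edgeSum w = 0) :
    ∃ φ : V → α, ∀ u v, G.Adj u v → w u v = φ v - φ u := by
  let root (v : V) : V := Quot.out (G.connectedComponentMk v)
  have reach (v : V) : G.Reachable (root v) v := ConnectedComponent.exact (Quot.out_eq _)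
  refine ⟨fun v => (reach v).some.edgeSum w, fun u v h => ?_⟩
  -- `root u = root v` only propositionally, so the walks are compared with a generalized root.
  have key : ∀ r r', r = r' → ∀ (p : G.Walk r u) (q : G.Walk r' v),
      w u v = q.edgeSum w - p.edgeSum w := by
    rintro r _ rfl p q
    rw [q.edgeSum_eq_of_closed_eq_zero hcyc (p.append (.cons h .nil))]
    simp
  exact key _ _ (congrArg Quot.out (ConnectedComponent.sound h.reachable)) _ _

end SimpleGraph

section Cycle

variable {ι K : Type*} [Field K] {B : Matrix ι ι K}

lemma prod_cycle_eq_of_skewSymmetrized {d : ι → K} (hd : ∀ i, d i ≠ 0)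
    (h : ∀ i j, d i * B i j = -(d j * B j i)) {k : ℕ} [NeZero k] (f : Fin k → ι) :
    ∏ t, B (f t) (f (t + 1)) = (-1) ^ k * ∏ t, B (f (t + 1)) (f t) := by
  have hrot : ∏ t, d (f (t + 1)) = ∏ t, d (f t) :=
    Equiv.prod_comp (Equiv.addRight 1) fun t => d (f t)
  refine mul_left_cancel₀
    (Finset.prod_ne_zero_iff.mpr fun t _ => hd (f t) : ∏ t, d (f t) ≠ 0) ?_
  calc (∏ t, d (f t)) * ∏ t, B (f t) (f (t + 1))
      = ∏ t, (-1) * (d (f (t + 1)) * B (f (t + 1)) (f t)) := by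
        rw [← Finset.prod_mul_distrib]
        exact Finset.prod_congr rfl fun t _ => by rw [h]; ring
    _ = (∏ t, d (f t)) * ((-1) ^ k * ∏ t, B (f (t + 1)) (f t)) := by
        rw [Finset.prod_mul_distrib, Finset.prod_mul_distrib, Finset.prod_const,
          Finset.card_univ, Fintype.card_fin, hrot]
        ring

lemma prod_neg_div_eq_one_of_prod_cycle {k : ℕ} [NeZero k] {f : Fin k → ι}
    (hf : ∀ t, B (f (t + 1)) (f t) ≠ 0)
    (hcyc : ∏ t, B (f t) (f (t + 1)) = (-1) ^ k * ∏ t, B (f (t + 1)) (f t)) :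
    ∏ t, -B (f t) (f (t + 1)) / B (f (t + 1)) (f t) = 1 := by
  have hne : ∏ t, B (f (t + 1)) (f t) ≠ 0 := Finset.prod_ne_zero_iff.mpr fun t _ => hf t
  have hneg : ∏ t, -B (f t) (f (t + 1)) = (-1) ^ k * ∏ t, B (f t) (f (t + 1)) := by
    simp [Finset.prod_neg]
  rw [Finset.prod_div_distrib, hneg, hcyc, ← mul_assoc, ← mul_pow, neg_one_mul, neg_neg,
    one_pow, one_mul, div_self hne]

end Cycle

def Matrix.supportGraph {ι R : Type*} [Zero R] (B : Matrix ι ι R) : SimpleGraph ι :=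
  SimpleGraph.fromRel fun i j => B i j ≠ 0

def CyclicProductCondition {n : ℕ} (B : Matrix (Fin n) (Fin n) ℝ) : Prop :=
  ∀ m : ℕ, ∀ f : Fin (m + 3) → Fin n,
    ∏ t : Fin (m + 3), B (f t) (f (t + 1)) =
      (-1 : ℝ) ^ (m + 3) * ∏ t : Fin (m + 3), B (f (t + 1)) (f t)

namespace SignSkewSymmetric

variable {n : ℕ} {B : Matrix (Fin n) (Fin n) ℝ}

lemma of_skewSymmetrized {d : Fin n → ℝ} (hd : ∀ i, 0 < d i)
    (h : ∀ i j, d i * B i j = -(d j * B j i)) : SignSkewSymmetric B := by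
  intro i j
  by_cases hij : B i j = 0
  · have hdji := h i j
    rw [hij, mul_zero, zero_eq_neg] at hdji
    exact Or.inl ⟨hij, (mul_eq_zero.mp hdji).resolve_left (hd j).ne'⟩
  · right
    have hji : B j i = -(d i * B i j) / d j := by
      field_simp [(hd j).ne']
      linarith [h i j]
    rw [hji, mul_div_assoc', div_neg_iff]
    exact Or.inr ⟨by nlinarith [hd i, mul_self_pos.mpr hij], hd j⟩

lemma diag_eq_zero (hS : SignSkewSymmetric B) (i : Fin n) : B i i = 0 := by
  rcases hS i i with ⟨h, -⟩ | h
  · exact h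
  · nlinarith [mul_self_nonneg (B i i)]

lemma mul_neg_of_adj (hS : SignSkewSymmetric B) {i j : Fin n} (h : B.supportGraph.Adj i j) :
    B i j * B j i < 0 :=
  (hS i j).resolve_left fun h0 => ((SimpleGraph.fromRel_adj _ _ _).mp h).2.elim (· h0.1) (· h0.2)

lemma neg_div_pos_of_adj (hS : SignSkewSymmetric B) {i j : Fin n}
    (h : B.supportGraph.Adj i j) : 0 < -B i j / B j i := by
  rw [neg_div, neg_pos, div_neg_iff, ← mul_neg_iff]
  exact hS.mul_neg_of_adj h

lemma prod_cycle_eq (hS : SignSkewSymmetric B) (hC : CyclicProductCondition B) {k : ℕ}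
    (f : Fin (k + 1) → Fin n) :
    ∏ t, B (f t) (f (t + 1)) = (-1) ^ (k + 1) * ∏ t, B (f (t + 1)) (f t) := by
  match k, f with
  | 0, f => simp [hS.diag_eq_zero]
  | 1, f => simpa [Fin.prod_univ_two] using mul_comm _ _
  | m + 2, f => exact hC m f

lemma edgeSum_log_closed_eq_zero (hS : SignSkewSymmetric B) (hC : CyclicProductCondition B)
    {u : Fin n} (c : B.supportGraph.Walk u u) :
    c.edgeSum (fun i j => Real.log (-B i j / B j i)) = 0 := by
  rcases hlen : c.length with _ | m
  · simp [SimpleGraph.Walk.edgeSum_eq_sum_range, hlen]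
  have hadj (t : Fin (m + 1)) : B.supportGraph.Adj (c.getVert t) (c.getVert ↑(t + 1)) := by
    rw [c.getVert_val_add_one_of_length_eq hlen]
    exact c.adj_getVert_succ (by omega)
  have hne (t : Fin (m + 1)) : B (c.getVert ↑(t + 1)) (c.getVert t) ≠ 0 :=
    right_ne_zero_of_mul (hS.mul_neg_of_adj (hadj t)).ne
  rw [c.edgeSum_eq_sum_fin_of_length_eq _ hlen,
    ← Real.log_prod fun t _ => (hS.neg_div_pos_of_adj (hadj t)).ne',
    prod_neg_div_eq_one_of_prod_cycle hne (hS.prod_cycle_eq hC _), Real.log_one]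

lemma exists_skewSymmetrizer (hS : SignSkewSymmetric B) (hC : CyclicProductCondition B) :
    ∃ d : Fin n → ℝ, (∀ i, 0 < d i) ∧ ∀ i j, d i * B i j = -(d j * B j i) := by
  obtain ⟨φ, hφ⟩ := SimpleGraph.exists_potential_of_edgeSum_closed_eq_zero
    fun _ c => hS.edgeSum_log_closed_eq_zero hC c
  refine ⟨Real.exp ∘ φ, fun i => Real.exp_pos _, fun i j => ?_⟩
  simp only [Function.comp_apply]
  by_cases hij : B.supportGraph.Adj i j
  · have hexp : Real.exp (φ j) = Real.exp (φ i) * (-B i j / B j i) := by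
      rw [← Real.exp_log (hS.neg_div_pos_of_adj hij), ← Real.exp_add, hφ i j hij,
        add_sub_cancel]
    rw [hexp]
    field_simp [right_ne_zero_of_mul (hS.mul_neg_of_adj hij).ne]
  · by_cases hii : i = j
    · simp [hii, hS.diag_eq_zero]
    · simp only [Matrix.supportGraph, SimpleGraph.fromRel_adj, ne_eq, not_and, not_or,
        not_not] at hij
      simp [(hij hii).1, (hij hii).2]

end SignSkewSymmetric

/-- A square real matrix `B` is skew-symmetrizable (there is a diagonal matrix with
positive diagonal entries `d` such that `diag d * B` is skew-symmetric) if and only if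
`B` is sign-skew-symmetric and all cyclic products of length `k ≥ 3` satisfy
`b_{i₁i₂} ⋯ b_{iₖi₁} = (-1)ᵏ b_{i₂i₁} ⋯ b_{i₁iₖ}`. -/
theorem skew_symmetrizable_iff_sss_and_cyclic {n : ℕ} (B : Matrix (Fin n) (Fin n) ℝ) :
    (∃ d : Fin n → ℝ, (∀ i, 0 < d i) ∧ ∀ i j, d i * B i j = -(d j * B j i)) ↔
    (SignSkewSymmetric B ∧
      ∀ m : ℕ, ∀ f : Fin (m + 3) → Fin n,
        ∏ t : Fin (m + 3), B (f t) (f (t + 1)) =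
          (-1 : ℝ) ^ (m + 3) * ∏ t : Fin (m + 3), B (f (t + 1)) (f t)) := by
  constructor
  · rintro ⟨d, hd, h⟩
    exact ⟨.of_skewSymmetrized hd h, fun m f =>
      prod_cycle_eq_of_skewSymmetrized (fun i => (hd i).ne') h f⟩
  · rintro ⟨hS, hC⟩
    exact hS.exists_skewSymmetrizer hC
end

section
/- The multiplicative group of any semifield is torsion-free. -/
/-- `semifieldR add x n = x ⊕ x² ⊕ ⋯ ⊕ x^(n+1)`. -/
def semifieldR {P : Type*} [CommGroup P] (add : P → P → P) (x : P) : ℕ → P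
  | 0 => x
  | n + 1 => add (semifieldR add x n) (x ^ (n + 2))

/-- The multiplicative group of any semifield is torsion-free: if `P` is an abelian
multiplicative group equipped with an auxiliary addition `⊕` which is commutative,
associative, and distributive with respect to the multiplication, then every element
of finite order in `P` is the identity. -/
theorem semifield_torsion_free {P : Type*} [CommGroup P] (add : P → P → P)
    (hcomm : ∀ a b, add a b = add b a)
    (hassoc : ∀ a b c, add (add a b) c = add a (add b c))
    (hdistrib : ∀ a b c, a * add b c = add (a * b) (a * c)) :
    ∀ (x : P) (k : ℕ), k ≠ 0 → x ^ k = 1 → x = 1 := by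
  intro x k hk hx
  have key : ∀ n, add x (x * semifieldR add x n) = semifieldR add x (n + 1) := by
    intro n
    induction n with
    | zero => simp [semifieldR, pow_succ, pow_one]
    | succ m ih =>
      show add x (x * add (semifieldR add x m) (x ^ (m + 2)))
          = add (semifieldR add x (m + 1)) (x ^ (m + 3))
      rw [hdistrib, ← hassoc, ih, ← pow_succ']
  rcases Nat.exists_eq_succ_of_ne_zero hk with ⟨n, rfl⟩
  cases n with
  | zero => simpa using hx
  | succ m =>
    set s : P := add 1 (semifieldR add x m) with hs
    have hxs : x * s = s := by
      have h1 : x * s = add x (x * semifieldR add x m) := by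
        rw [hs, hdistrib, mul_one]
      rw [h1, key m]
      show add (semifieldR add x m) (x ^ (m + 2)) = s
      rw [hx, hcomm, hs]
    have := hxs
    calc x = x * s * s⁻¹ := by group
    _ = s * s⁻¹ := by rw [hxs]
    _ = 1 := mul_inv_cancel s
end

section
/- For a skew-symmetrizable real matrix B, there exists a diagonal matrix H with positive diagonal entries such that H B H^{-1} is skew-symmetric; moreover, the matrix S(B) = H B H^{-1} is uniquely determined by B, with entries s_ij = sgn(b_ij) · sqrt(|b_ij b_ji|). -/
/-!
If `D B` is skew-symmetric for a positive diagonal `D`, conjugating by `H = √D` gives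
`H B H⁻¹ = H⁻¹ (D B) H⁻¹`, which is again skew-symmetric. Conversely, for any positive diagonal `H`
with `S = H B H⁻¹` skew-symmetric, `s_ij² = -s_ij s_ji = -b_ij b_ji`, and `s_ij` has the sign of
`b_ij` because `H i / H j > 0`; so `s_ij` is determined by `B`.
-/

namespace Real

theorem sign_mul_abs (r : ℝ) : sign r * |r| = r := by
  rcases lt_trichotomy r 0 with hr | rfl | hr
  · rw [sign_of_neg hr, abs_of_neg hr, neg_one_mul, neg_neg]
  · rw [abs_zero, mul_zero]
  · rw [sign_of_pos hr, abs_of_pos hr, one_mul]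

theorem sign_mul_of_pos {c : ℝ} (hc : 0 < c) (r : ℝ) : sign (c * r) = sign r := by
  rcases lt_trichotomy r 0 with hr | rfl | hr
  · rw [sign_of_neg hr, sign_of_neg (mul_neg_of_pos_of_neg hc hr)]
  · rw [mul_zero]
  · rw [sign_of_pos hr, sign_of_pos (mul_pos hc hr)]

theorem sign_mul_sqrt_abs_mul_eq {s x y : ℝ} (hsq : s * s = -(x * y)) (hsign : sign s = sign x) :
    sign x * √|x * y| = s := by
  have habs : |x * y| = s * s := by
    rw [abs_of_nonpos (by nlinarith [mul_self_nonneg s]), hsq]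
  rw [habs, sqrt_mul_self_eq_abs, ← hsign, sign_mul_abs]

end Real

theorem sqrt_mul_mul_inv_sqrt_eq_neg {p q x y : ℝ} (hp : 0 < p) (hq : 0 < q)
    (h : p * x = -(q * y)) : √p * x * (√q)⁻¹ = -(√q * y * (√p)⁻¹) := by
  have hp' : √p * √p = p := Real.mul_self_sqrt hp.le
  have hq' : √q * √q = q := Real.mul_self_sqrt hq.le
  have hp₀ : √p ≠ 0 := (Real.sqrt_pos.2 hp).ne'
  have hq₀ : √q ≠ 0 := (Real.sqrt_pos.2 hq).ne'
  field_simp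
  linear_combination x * hp' + y * hq' + h

theorem mul_mul_inv_eq_sign_mul_sqrt {a b x y : ℝ} (ha : 0 < a) (hb : 0 < b)
    (h : a * x * b⁻¹ = -(b * y * a⁻¹)) : a * x * b⁻¹ = Real.sign x * √|x * y| := by
  refine (Real.sign_mul_sqrt_abs_mul_eq ?_ ?_).symm
  · calc a * x * b⁻¹ * (a * x * b⁻¹) = a * x * b⁻¹ * -(b * y * a⁻¹) := by rw [← h]
      _ = -(x * y) := by field_simp
  · rw [mul_right_comm, Real.sign_mul_of_pos (by positivity)]

/-- For a skew-symmetrizable real matrix `B`, there exists a diagonal matrix `H`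
with positive diagonal entries such that `H B H⁻¹` is skew-symmetric; moreover
`S(B) = H B H⁻¹` is uniquely determined by `B`, with entries
`s_ij = sgn(b_ij) · √|b_ij b_ji|`. -/
theorem exists_unique_skew_symmetrization {n : ℕ} (B : Matrix (Fin n) (Fin n) ℝ)
    (hB : ∃ d : Fin n → ℝ, (∀ i, 0 < d i) ∧ ∀ i j, d i * B i j = -(d j * B j i)) :
    (∃ H : Fin n → ℝ, (∀ i, 0 < H i) ∧
      ∀ i j, H i * B i j * (H j)⁻¹ = -(H j * B j i * (H i)⁻¹)) ∧
    (∀ H : Fin n → ℝ, (∀ i, 0 < H i) →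
      (∀ i j, H i * B i j * (H j)⁻¹ = -(H j * B j i * (H i)⁻¹)) →
      ∀ i j, H i * B i j * (H j)⁻¹ = Real.sign (B i j) * Real.sqrt |B i j * B j i|) := by
  obtain ⟨d, hd, hskew⟩ := hB
  refine ⟨⟨fun i => √(d i), fun i => Real.sqrt_pos.2 (hd i), fun i j => ?_⟩, ?_⟩
  · exact sqrt_mul_mul_inv_sqrt_eq_neg (hd i) (hd j) (hskew i j)
  · intro H hH hconj i j
    exact mul_mul_inv_eq_sign_mul_sqrt (hH i) (hH j) (hconj i j)
end

section
/- For a skew-symmetrizable matrix B and any index k, the normalized skew-symmetrization commutes with mutation: S(mu_k(B)) = mu_k(S(B)). -/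
/-- Matrix mutation in direction `k` for real matrices. -/
noncomputable def mutR {n : ℕ} (k : Fin n) (B : Matrix (Fin n) (Fin n) ℝ) : Matrix (Fin n) (Fin n) ℝ :=
  Matrix.of fun i j =>
    if i = k ∨ j = k then -B i j
    else B i j + (|B i k| * B k j + B i k * |B k j|) / 2

/-- The normalized skew-symmetrization `S(B)`, with entries
`s_ij = sgn(b_ij) · √|b_ij b_ji|`. -/
noncomputable def skewSym {n : ℕ} (B : Matrix (Fin n) (Fin n) ℝ) : Matrix (Fin n) (Fin n) ℝ :=
  Matrix.of fun i j => Real.sign (B i j) * Real.sqrt |B i j * B j i|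

lemma sign_mul_abs' (r : ℝ) : Real.sign r * |r| = r := by
  rcases lt_trichotomy r 0 with h | h | h
  · rw [Real.sign_of_neg h, abs_of_neg h]; ring
  · simp [h]
  · rw [Real.sign_of_pos h, abs_of_pos h]; ring

lemma skewSym_entry {n : ℕ} (B : Matrix (Fin n) (Fin n) ℝ) (d : Fin n → ℝ)
    (hd : ∀ i, 0 < d i) (h : ∀ i j, d i * B i j = -(d j * B j i)) (i j : Fin n) :
    skewSym B i j = B i j * (Real.sqrt (d i) / Real.sqrt (d j)) := by
  have hdi := hd i
  have hdj := hd j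
  have hji : B j i = -(d i * B i j) / d j := by
    field_simp
    linarith [h j i]
  simp only [skewSym, Matrix.of_apply, hji]
  have h1 : B i j * (-(d i * B i j) / d j) = -(d i / d j * (B i j) ^ 2) := by ring
  rw [h1, abs_neg, abs_mul, abs_div, abs_of_pos hdi, abs_of_pos hdj, abs_pow, sq_abs,
    Real.sqrt_mul (by positivity), Real.sqrt_sq_eq_abs, Real.sqrt_div hdi.le,
    show Real.sign (B i j) * (Real.sqrt (d i) / Real.sqrt (d j) * |B i j|)
      = (Real.sign (B i j) * |B i j|) * (Real.sqrt (d i) / Real.sqrt (d j)) by ring,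
    sign_mul_abs']

lemma mut_symmetrizable {n : ℕ} (B : Matrix (Fin n) (Fin n) ℝ) (d : Fin n → ℝ)
    (hd : ∀ i, 0 < d i) (h : ∀ i j, d i * B i j = -(d j * B j i)) (k : Fin n)
    (i j : Fin n) : d i * mutR k B i j = -(d j * mutR k B j i) := by
  have a1 : d i * |B i k| = d k * |B k i| := by
    have : |d i * B i k| = |d k * B k i| := by rw [h i k, abs_neg]
    rwa [abs_mul, abs_mul, abs_of_pos (hd i), abs_of_pos (hd k)] at this
  have a2 : d k * |B k j| = d j * |B j k| := by
    have : |d k * B k j| = |d j * B j k| := by rw [h k j, abs_neg]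
    rwa [abs_mul, abs_mul, abs_of_pos (hd k), abs_of_pos (hd j)] at this
  simp only [mutR, Matrix.of_apply]
  by_cases hc : i = k ∨ j = k
  · rw [if_pos hc, if_pos (Or.symm hc)]
    linarith [h i j]
  · rw [if_neg hc, if_neg fun hx => hc (Or.symm hx)]
    linear_combination h i j + B k j / 2 * a1 + |B k i| / 2 * h k j
      + |B k j| / 2 * h i k - B k i / 2 * a2

/-- For a skew-symmetrizable matrix `B` and any index `k`, the normalized
skew-symmetrization commutes with mutation: `S(μ_k(B)) = μ_k(S(B))`. -/
theorem skewSym_comm_mutation {n : ℕ} (B : Matrix (Fin n) (Fin n) ℝ)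
    (hB : ∃ d : Fin n → ℝ, (∀ i, 0 < d i) ∧ ∀ i j, d i * B i j = -(d j * B j i))
    (k : Fin n) :
    skewSym (mutR k B) = mutR k (skewSym B) := by
  obtain ⟨d, hd, h⟩ := hB
  have he : ∀ i, 0 < Real.sqrt (d i) := fun i => Real.sqrt_pos.mpr (hd i)
  ext i j
  rw [skewSym_entry (mutR k B) d hd (mut_symmetrizable B d hd h k) i j]
  simp only [mutR, Matrix.of_apply]
  rw [skewSym_entry B d hd h i j, skewSym_entry B d hd h i k,
    skewSym_entry B d hd h k j]
  by_cases hc : i = k ∨ j = k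
  · rw [if_pos hc, if_pos hc]; ring
  · rw [if_neg hc, if_neg hc]
    rw [abs_mul, abs_mul, abs_of_nonneg (a := Real.sqrt (d i) / Real.sqrt (d k)) (by positivity),
      abs_of_nonneg (a := Real.sqrt (d k) / Real.sqrt (d j)) (by positivity)]
    field_simp [(he i).ne', (he j).ne', (he k).ne']
end

section
/- For a skew-symmetrizable integer matrix B with diagram Γ(B), and three vertices i, j, k such that there is an oriented path i → k → j with edge weights a = |b_ik b_ki| and b = |b_kj b_jk|, the weight c = |b_ij b_ji| of the edge between i and j and the weight c' of the corresponding edge in the diagram of mu_k(B) satisfy ±√c ± √c' = √(ab), where the sign before √c (resp. √c') is + if i,j,k form an oriented cycle in Γ(B) (resp. Γ(mu_k(B))) and − otherwise. -/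
/-- Matrix mutation in direction `k` for integer matrices. -/
def mutZ {n : ℕ} (k : Fin n) (B : Matrix (Fin n) (Fin n) ℤ) : Matrix (Fin n) (Fin n) ℤ :=
  Matrix.of fun i j =>
    if i = k ∨ j = k then -B i j
    else B i j + (|B i k| * B k j + B i k * |B k j|) / 2

lemma sqrtAbsAux {di dj x y : ℝ} (hdi : 0 < di) (hdj : 0 < dj)
    (h : di * x = -(dj * y)) :
    Real.sqrt |x * y| = |x| * (Real.sqrt di / Real.sqrt dj) := by
  have hy : y = -(di / dj) * x := by
    field_simp
    linarith [h]
  have h1 : x * y = -(di / dj * x ^ 2) := by rw [hy]; ring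
  rw [h1, abs_neg, abs_of_nonneg (by positivity)]
  rw [Real.sqrt_mul (by positivity), Real.sqrt_sq_eq_abs,
    Real.sqrt_div hdi.le]
  ring

lemma signedAbsAux {x s : ℝ} (hs : 0 < s) :
    (if 0 < x then (1 : ℝ) else -1) * (|x| * s) = x * s := by
  by_cases hc : 0 < x
  · rw [if_pos hc, abs_of_pos hc]; ring
  · push_neg at hc
    rw [if_neg (not_lt.mpr hc), abs_of_nonpos hc]; ring

/-- Diagram mutation rule: for a skew-symmetrizable integer matrix `B` and vertices
`i, k, j` with an oriented path `i → k → j` in the diagram `Γ(B)` (i.e. `b_ik > 0`,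
`b_kj > 0`), with edge weights `a = |b_ik b_ki|`, `b = |b_kj b_jk|`,
`c = |b_ij b_ji|`, and `c'` the corresponding weight for `μ_k(B)`, one has
`±√c ± √c' = √(ab)`, where the sign before `√c` (resp. `√c'`) is `+` if `i, j, k`
form an oriented cycle in `Γ(B)` (resp. `Γ(μ_k(B))`) and `−` otherwise. -/
theorem diagram_mutation_rule {n : ℕ} (B : Matrix (Fin n) (Fin n) ℤ)
    (hB : ∃ d : Fin n → ℚ, (∀ i, 0 < d i) ∧
      ∀ i j, d i * (B i j : ℚ) = -(d j * (B j i : ℚ)))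
    (i j k : Fin n) (hij : i ≠ j) (hik : i ≠ k) (hjk : j ≠ k)
    (hpath₁ : 0 < B i k) (hpath₂ : 0 < B k j) :
    (if 0 < B j i then (1 : ℝ) else -1) * Real.sqrt ((|B i j * B j i| : ℤ) : ℝ) +
      (if 0 < (mutZ k B) i j then (1 : ℝ) else -1) *
        Real.sqrt ((|(mutZ k B) i j * (mutZ k B) j i| : ℤ) : ℝ) =
    Real.sqrt (((|B i k * B k i| : ℤ) : ℝ) * ((|B k j * B j k| : ℤ) : ℝ)) := by
  obtain ⟨d, hd, hskew⟩ := hB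
  have heQ : (0 : ℚ) < (B i k : ℚ) := by exact_mod_cast hpath₁
  have hgQ : (0 : ℚ) < (B k j : ℚ) := by exact_mod_cast hpath₂
  have hfZ : B k i < 0 := by
    by_contra hcon
    push_neg at hcon
    have hcon' : (0 : ℚ) ≤ (B k i : ℚ) := by exact_mod_cast hcon
    have := hskew k i
    nlinarith [hd i, hd k]
  have hhZ : B j k < 0 := by
    by_contra hcon
    push_neg at hcon
    have hcon' : (0 : ℚ) ≤ (B j k : ℚ) := by exact_mod_cast hcon
    have := hskew k j
    nlinarith [hd j, hd k]
  -- compute mutated entries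
  have hp' : (mutZ k B) i j = B i j + B i k * B k j := by
    simp only [mutZ, Matrix.of_apply, hik, hjk, or_self, if_neg, if_false]
    rw [abs_of_pos hpath₁, abs_of_pos hpath₂]
    omega
  have hq' : (mutZ k B) j i = B j i - B j k * B k i := by
    simp only [mutZ, Matrix.of_apply, hjk, hik, or_self, if_neg, if_false]
    rw [abs_of_neg hhZ, abs_of_neg hfZ]
    have : -B j k * B k i + B j k * -B k i = -(2 * (B j k * B k i)) := by ring
    rw [this]
    omega
  -- real variables
  obtain ⟨Di, hDi0, hDi⟩ : ∃ x : ℝ, 0 < x ∧ ((d i : ℝ)) = x :=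
    ⟨_, by exact_mod_cast hd i, rfl⟩
  obtain ⟨Dj, hDj0, hDj⟩ : ∃ x : ℝ, 0 < x ∧ ((d j : ℝ)) = x :=
    ⟨_, by exact_mod_cast hd j, rfl⟩
  obtain ⟨Dk, hDk0, hDk⟩ : ∃ x : ℝ, 0 < x ∧ ((d k : ℝ)) = x :=
    ⟨_, by exact_mod_cast hd k, rfl⟩
  have hR1 : Di * (B i j : ℝ) = -(Dj * (B j i : ℝ)) := by
    rw [← hDi, ← hDj]; exact_mod_cast congrArg (fun x : ℚ => (x : ℝ)) (hskew i j)
  have hR2 : Di * (B i k : ℝ) = -(Dk * (B k i : ℝ)) := by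
    rw [← hDi, ← hDk]; exact_mod_cast congrArg (fun x : ℚ => (x : ℝ)) (hskew i k)
  have hR3 : Dk * (B k j : ℝ) = -(Dj * (B j k : ℝ)) := by
    rw [← hDk, ← hDj]; exact_mod_cast congrArg (fun x : ℚ => (x : ℝ)) (hskew k j)
  have he0 : (0 : ℝ) < (B i k : ℝ) := by exact_mod_cast hpath₁
  have hg0 : (0 : ℝ) < (B k j : ℝ) := by exact_mod_cast hpath₂
  have hp'R : ((mutZ k B) i j : ℝ) = (B i j : ℝ) + (B i k : ℝ) * (B k j : ℝ) := by
    rw [hp']; push_cast; ring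
  have hq'R : ((mutZ k B) j i : ℝ) = (B j i : ℝ) - (B j k : ℝ) * (B k i : ℝ) := by
    rw [hq']; push_cast; ring
  -- skew relation for mutated entries
  have hR4 : Di * ((mutZ k B) i j : ℝ) = -(Dj * ((mutZ k B) j i : ℝ)) := by
    rw [hp'R, hq'R]
    have key : Dk * (Di * ((B i k : ℝ) * (B k j : ℝ)))
        = Dk * (Dj * ((B j k : ℝ) * (B k i : ℝ))) := by
      have h5 : (Di * (B i k : ℝ)) * (Dk * (B k j : ℝ))
          = (Dk * (B k i : ℝ)) * (Dj * (B j k : ℝ)) := by rw [hR2, hR3]; ring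
      nlinarith [h5]
    have key2 : Di * ((B i k : ℝ) * (B k j : ℝ)) = Dj * ((B j k : ℝ) * (B k i : ℝ)) :=
      mul_left_cancel₀ (ne_of_gt hDk0) key
    nlinarith [hR1, key2]
  -- sqrt computations
  have hs1 : Real.sqrt ((|B i j * B j i| : ℤ) : ℝ)
      = |(B i j : ℝ)| * (Real.sqrt Di / Real.sqrt Dj) := by
    rw [show ((|B i j * B j i| : ℤ) : ℝ) = |(B i j : ℝ) * (B j i : ℝ)| by push_cast; ring]
    exact sqrtAbsAux hDi0 hDj0 hR1
  have hs2 : Real.sqrt ((|(mutZ k B) i j * (mutZ k B) j i| : ℤ) : ℝ)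
      = |((mutZ k B) i j : ℝ)| * (Real.sqrt Di / Real.sqrt Dj) := by
    rw [show ((|(mutZ k B) i j * (mutZ k B) j i| : ℤ) : ℝ)
        = |((mutZ k B) i j : ℝ) * ((mutZ k B) j i : ℝ)| by push_cast; ring]
    exact sqrtAbsAux hDi0 hDj0 hR4
  have hs3 : Real.sqrt (((|B i k * B k i| : ℤ) : ℝ) * ((|B k j * B j k| : ℤ) : ℝ))
      = (B i k : ℝ) * (B k j : ℝ) * (Real.sqrt Di / Real.sqrt Dj) := by
    rw [show ((|B i k * B k i| : ℤ) : ℝ) = |(B i k : ℝ) * (B k i : ℝ)| by push_cast; ring,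
      show ((|B k j * B j k| : ℤ) : ℝ) = |(B k j : ℝ) * (B j k : ℝ)| by push_cast; ring,
      Real.sqrt_mul (abs_nonneg _), sqrtAbsAux hDi0 hDk0 hR2, sqrtAbsAux hDk0 hDj0 hR3,
      abs_of_pos he0, abs_of_pos hg0]
    have hk0 : Real.sqrt Dk ≠ 0 := ne_of_gt (Real.sqrt_pos.mpr hDk0)
    field_simp
  rw [hs1, hs2, hs3]
  have hRpos : 0 < Real.sqrt Di / Real.sqrt Dj :=
    div_pos (Real.sqrt_pos.mpr hDi0) (Real.sqrt_pos.mpr hDj0)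
  -- signed terms
  have t1 : (if 0 < B j i then (1 : ℝ) else -1) * (|(B i j : ℝ)| * (Real.sqrt Di / Real.sqrt Dj))
      = -(B i j : ℝ) * (Real.sqrt Di / Real.sqrt Dj) := by
    by_cases hc : 0 < B j i
    · have hq0 : (0 : ℝ) < (B j i : ℝ) := by exact_mod_cast hc
      have hp0 : (B i j : ℝ) < 0 := by nlinarith [hR1]
      rw [if_pos hc, abs_of_neg hp0]; ring
    · push_neg at hc
      have hq0 : (B j i : ℝ) ≤ 0 := by exact_mod_cast hc
      have hp0 : 0 ≤ (B i j : ℝ) := by nlinarith [hR1]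
      rw [if_neg (not_lt.mpr hc), abs_of_nonneg hp0]; ring
  have t2 : (if 0 < (mutZ k B) i j then (1 : ℝ) else -1) *
      (|((mutZ k B) i j : ℝ)| * (Real.sqrt Di / Real.sqrt Dj))
      = ((mutZ k B) i j : ℝ) * (Real.sqrt Di / Real.sqrt Dj) := by
    by_cases hc : 0 < (mutZ k B) i j
    · have : (0 : ℝ) < ((mutZ k B) i j : ℝ) := by exact_mod_cast hc
      rw [if_pos hc, abs_of_pos this]; ring
    · push_neg at hc
      have : ((mutZ k B) i j : ℝ) ≤ 0 := by exact_mod_cast hc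
      rw [if_neg (not_lt.mpr hc), abs_of_nonpos this]; ring
  rw [t1, t2, hp'R]
  ring
end

section
/- Let P and Q be polynomials in several variables with coefficients in an integral domain S, with nonzero constant terms a and b respectively. If the ratio P/Q is a Laurent polynomial over S, then P/Q is in fact a polynomial over S whose constant term is a/b (in particular b divides a in the appropriate sense). -/
/-!
A monomial is a product of the variables `X i`, which are prime in `S[σ]`. None of them divides
`Q`, because `Q` has a nonzero constant term; so from `Q ∣ x^m · P` one can cancel the monomial
prime power by prime power and get `Q ∣ P`. Comparing constant terms of `P = Q · R` gives the
rest.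
-/

open MvPolynomial

section IsCancelMulZero

variable {M : Type*} [CommMonoidWithZero M] [IsCancelMulZero M]

theorem Prime.dvd_of_dvd_pow_mul {p a b : M} (hp : Prime p) (hpa : ¬p ∣ a) {n : ℕ}
    (h : a ∣ p ^ n * b) : a ∣ b := by
  obtain ⟨c, hc⟩ := h
  obtain ⟨d, rfl⟩ := hp.pow_dvd_of_dvd_mul_left n hpa ⟨b, hc.symm⟩
  exact ⟨d, mul_left_cancel₀ (pow_ne_zero n hp.ne_zero) (by rw [hc, mul_left_comm])⟩

theorem dvd_of_dvd_prod_pow_mul {ι : Type*} {a b : M} {s : Finset ι} {p : ι → M}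
    {n : ι → ℕ} (hp : ∀ i ∈ s, Prime (p i)) (hpa : ∀ i ∈ s, ¬p i ∣ a)
    (h : a ∣ (∏ i ∈ s, p i ^ n i) * b) : a ∣ b := by
  exact Finset.prod_induction (fun i => p i ^ n i) (fun x => ∀ b, a ∣ x * b → a ∣ b)
    (fun x y hx hy b h => hy b (hx _ (by rwa [mul_assoc] at h)))
    (fun b h => by rwa [one_mul] at h)
    (fun i hi b h => (hp i hi).dvd_of_dvd_pow_mul (hpa i hi) h) b h

end IsCancelMulZero

namespace MvPolynomial

variable {σ : Type*}

theorem not_X_dvd_of_constantCoeff_ne_zero {R : Type*} [CommSemiring R] {p : MvPolynomial σ R}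
    (hp : constantCoeff p ≠ 0) (i : σ) : ¬X i ∣ p := by
  rintro ⟨q, rfl⟩
  simp at hp

theorem dvd_of_dvd_monomial_one_mul {R : Type*} [CommRing R] [IsDomain R]
    {p q : MvPolynomial σ R} (hq : constantCoeff q ≠ 0) {m : σ →₀ ℕ}
    (h : q ∣ monomial m 1 * p) : q ∣ p := by
  rw [monomial_eq, map_one, one_mul, Finsupp.prod] at h
  exact dvd_of_dvd_prod_pow_mul (fun i _ => X_prime)
    (fun i _ => not_X_dvd_of_constantCoeff_ne_zero hq i) h

end MvPolynomial

theorem laurent_ratio_is_polynomial_general {S : Type*} [CommRing S] [IsDomain S] {σ : Type*}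
    (P Q : MvPolynomial σ S)
    (hb : MvPolynomial.coeff 0 Q ≠ 0)
    (hL : ∃ (R : MvPolynomial σ S) (m : σ →₀ ℕ),
      P * MvPolynomial.monomial m (1 : S) = Q * R) :
    ∃ R : MvPolynomial σ S, P = Q * R ∧
      MvPolynomial.coeff 0 Q * MvPolynomial.coeff 0 R = MvPolynomial.coeff 0 P := by
  obtain ⟨R₀, m, hPR₀⟩ := hL
  obtain ⟨R, hR⟩ : Q ∣ P :=
    dvd_of_dvd_monomial_one_mul (by rwa [constantCoeff_eq]) ⟨R₀, by rw [mul_comm, hPR₀]⟩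
  refine ⟨R, hR, ?_⟩
  simp only [hR, ← constantCoeff_eq, map_mul]

/-- Let `P` and `Q` be multivariate polynomials over an integral domain `S`, with
nonzero constant terms `a` and `b` respectively. If `P/Q` is a Laurent polynomial
over `S` (i.e. `P · x^m = Q · R` for some polynomial `R` and some monomial `x^m`),
then `P/Q` is in fact a polynomial over `S` with constant term `a/b` (in particular
`b` divides `a`). -/
theorem laurent_ratio_is_polynomial {S : Type*} [CommRing S] [IsDomain S] {σ : Type*}
    (P Q : MvPolynomial σ S)
    (ha : MvPolynomial.coeff 0 P ≠ 0) (hb : MvPolynomial.coeff 0 Q ≠ 0)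
    (hL : ∃ (R : MvPolynomial σ S) (m : σ →₀ ℕ),
      P * MvPolynomial.monomial m (1 : S) = Q * R) :
    ∃ R : MvPolynomial σ S, P = Q * R ∧
      MvPolynomial.coeff 0 Q * MvPolynomial.coeff 0 R = MvPolynomial.coeff 0 P :=
  laurent_ratio_is_polynomial_general P Q hb hL
end
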